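/- Let (X,d,m) be an RCD(K,∞) space and v ∈ D(div) an L² vector field with divergence in L². Then for every t > 0 the vector field h_{H,t}(v) lies in H^{1,2}_C(TX) ∩ D(div) and its divergence satisfies div(h_{H,t}(v)) = P_t(div(v)), where P_t is the heat semigroup on functions. -/

import Mathlib

open MeasureTheory Filter Topology

theorem inner_grad_map_eq_neg_inner_map
    {F H : Type*} [Inner ℝ F] [Inner ℝ H] {Sob : Set F} {grad : F → H}
    {S : F → F} {T : H → H} {v : H} {g : F}
    (hS_sob : ∀ f ∈ Sob, S f ∈ Sob)
    (hS_sa : ∀ f₁ f₂ : F, inner ℝ (S f₁) f₂ = (inner ℝ f₁ (S f₂) : ℝ))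
    (hT_sa : ∀ w₁ w₂ : H, inner ℝ (T w₁) w₂ = (inner ℝ w₁ (T w₂) : ℝ))
    (hcomm : ∀ f ∈ Sob, T (grad f) = grad (S f))
    (hv : ∀ f ∈ Sob, inner ℝ (grad f) v = (-(inner ℝ f g) : ℝ)) :
    ∀ f ∈ Sob, inner ℝ (grad f) (T v) = (-(inner ℝ f (S g)) : ℝ) := by
  intro f hf
  calc inner ℝ (grad f) (T v) = inner ℝ (grad (S f)) v := by rw [← hcomm f hf, hT_sa]
    _ = -inner ℝ (S f) g := hv (S f) (hS_sob f hf)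
    _ = -inner ℝ f (S g) := by rw [hS_sa]

theorem heatFlow_mem_sobolev_and_div_eq_general
    {F H : Type*} [NormedAddCommGroup F] [InnerProductSpace ℝ F]
    [NormedAddCommGroup H] [InnerProductSpace ℝ H]
    (Sob : Set F) (grad : F → H)
    (P : ℝ → F → F) (hH : ℝ → H → H)
    (HHspace HC Ddiv : Set H) (dvg : H → F)
    (hHH_sub_HC : HHspace ⊆ HC)
    (hdiv_char : ∀ v ∈ Ddiv, ∀ f ∈ Sob, inner ℝ (grad f) v = (-(inner ℝ f (dvg v)) : ℝ))
    (hdiv_def : ∀ (v : H) (g : F), (∀ f ∈ Sob, inner ℝ (grad f) v = (-(inner ℝ f g) : ℝ)) →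
      v ∈ Ddiv ∧ dvg v = g)
    (hP_sob : ∀ f ∈ Sob, ∀ t : ℝ, 0 ≤ t → P t f ∈ Sob)
    (hP_sa : ∀ (f g : F) (t : ℝ), 0 ≤ t → inner ℝ (P t f) g = (inner ℝ f (P t g) : ℝ))
    (hH_sa : ∀ (v w : H) (t : ℝ), 0 ≤ t → inner ℝ (hH t v) w = (inner ℝ v (hH t w) : ℝ))
    (hcommute : ∀ f ∈ Sob, ∀ t : ℝ, 0 ≤ t → hH t (grad f) = grad (P t f))
    (hreg : ∀ (v : H) (t : ℝ), 0 < t → hH t v ∈ HHspace)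
    (v : H) (hv : v ∈ Ddiv) (t : ℝ) (ht : 0 < t) :
    hH t v ∈ HC ∧ hH t v ∈ Ddiv ∧ dvg (hH t v) = P t (dvg v) := by
  have hibp := inner_grad_map_eq_neg_inner_map (fun f hf => hP_sob f hf t ht.le)
    (fun f₁ f₂ => hP_sa f₁ f₂ t ht.le) (fun w₁ w₂ => hH_sa w₁ w₂ t ht.le)
    (fun f hf => hcommute f hf t ht.le) (hdiv_char v hv)
  exact ⟨hHH_sub_HC (hreg v t ht), hdiv_def _ _ hibp⟩

/-- On an `RCD(K,∞)` space, for every `v ∈ D(div)` and `t > 0` the vector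
field `h_{H,t}(v)` belongs to `H^{1,2}_C(TX) ∩ D(div)` and `div(h_{H,t} v) = P_t (div v)`.

Abstract encoding of the setting: `F` is the Hilbert space `L²(X,m)` of functions, `H` is the
Hilbert space `L²(TX)` of vector fields, `Sob ⊆ F` is the Sobolev space `H^{1,2}(X)` with
gradient map `grad : F → H` (defined on `Sob`), `P` is the heat semigroup on functions
(self-adjoint, preserving `Sob`), `hH` is the heat flow of vector fields (self-adjoint, mapping
into `H^{1,2}_H(TX) ⊆ H^{1,2}_C(TX)` for positive times, and commuting with gradients:
`h_{H,t}(∇f) = ∇ P_t f`), and `D(div)` is the set of `v` with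
`⟪∇f, v⟫ = -⟪f, div v⟫` for all `f ∈ Sob`, the divergence being characterized by this
integration-by-parts identity. -/
theorem heatFlow_mem_sobolev_and_div_eq
    {F H : Type*} [NormedAddCommGroup F] [InnerProductSpace ℝ F] [CompleteSpace F]
    [NormedAddCommGroup H] [InnerProductSpace ℝ H] [CompleteSpace H]
    (Sob : Set F) (grad : F → H)
    (P : ℝ → F → F) (hH : ℝ → H → H)
    (HHspace HC Ddiv : Set H) (dvg : H → F)
    (hHH_sub_HC : HHspace ⊆ HC)
    (hdiv_char : ∀ v ∈ Ddiv, ∀ f ∈ Sob, inner ℝ (grad f) v = (-(inner ℝ f (dvg v)) : ℝ))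
    (hdiv_def : ∀ (v : H) (g : F), (∀ f ∈ Sob, inner ℝ (grad f) v = (-(inner ℝ f g) : ℝ)) →
      v ∈ Ddiv ∧ dvg v = g)
    (hP_sob : ∀ f ∈ Sob, ∀ t : ℝ, 0 ≤ t → P t f ∈ Sob)
    (hP_sa : ∀ (f g : F) (t : ℝ), 0 ≤ t → inner ℝ (P t f) g = (inner ℝ f (P t g) : ℝ))
    (hH_sa : ∀ (v w : H) (t : ℝ), 0 ≤ t → inner ℝ (hH t v) w = (inner ℝ v (hH t w) : ℝ))
    (hcommute : ∀ f ∈ Sob, ∀ t : ℝ, 0 ≤ t → hH t (grad f) = grad (P t f))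
    (hreg : ∀ (v : H) (t : ℝ), 0 < t → hH t v ∈ HHspace)
    (v : H) (hv : v ∈ Ddiv) (t : ℝ) (ht : 0 < t) :
    hH t v ∈ HC ∧ hH t v ∈ Ddiv ∧ dvg (hH t v) = P t (dvg v) :=
  heatFlow_mem_sobolev_and_div_eq_general Sob grad P hH HHspace HC Ddiv dvg hHH_sub_HC hdiv_char
    hdiv_def hP_sob hP_sa hH_sa hcommute hreg v hv t ht
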